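/- For every k ≥ 1, every number of players n and every size vector (m₁,…,m_n), the set of n-player games of size m₁×…×m_n having exactly k Nash equilibria, all of which are strict equilibria, is an open subset of the set of all games of size m₁×…×m_n. -/

import Mathlib

/-- The set of pure strategy profiles of an `n`-player game in which
player `i` has `m i` pure strategies. -/
abbrev Strat {n : ℕ} (m : Fin n → ℕ) : Type := ∀ i, Fin (m i)

/-- An `n`-player game of size `m 0 × ⋯ × m (n-1)`: player `i`'s payoff function is `G i`.
The space of such games carries the (product, i.e. Euclidean) topology. -/
abbrev Game {n : ℕ} (m : Fin n → ℕ) : Type := Fin n → Strat m → ℝ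

/-- The Dirac (pure) mixed strategy concentrated on `a`. -/
def pureStrat {k : ℕ} (a : Fin k) : Fin k → ℝ := fun b => if b = a then 1 else 0

/-- A mixed strategy profile: each player plays a probability distribution
on her pure strategies. -/
def IsMixedProfile {n : ℕ} {m : Fin n → ℕ} (σ : ∀ i, Fin (m i) → ℝ) : Prop :=
  ∀ i, (∀ a, 0 ≤ σ i a) ∧ ∑ a, σ i a = 1

/-- Multilinear extension of player `i`'s payoff to mixed strategy profiles. -/
def mixedPayoff {n : ℕ} {m : Fin n → ℕ} (G : Game m) (i : Fin n)
    (σ : ∀ j, Fin (m j) → ℝ) : ℝ :=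
  ∑ s : Strat m, (∏ j, σ j (s j)) * G i s

/-- Player `i`'s payoff when deviating to the pure strategy `t`, the others
keeping their strategies in `σ`: this is `Uⁱ(t, σ⁻ⁱ)`. -/
def devPayoff {n : ℕ} {m : Fin n → ℕ} (G : Game m) (i : Fin n)
    (σ : ∀ j, Fin (m j) → ℝ) (t : Fin (m i)) : ℝ :=
  mixedPayoff G i (Function.update σ i (pureStrat t))

/-- Nash equilibrium: no player gains by a unilateral pure deviation. -/
def IsNash {n : ℕ} {m : Fin n → ℕ} (G : Game m) (σ : ∀ i, Fin (m i) → ℝ) : Prop :=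
  IsMixedProfile σ ∧ ∀ (i : Fin n) (t : Fin (m i)), devPayoff G i σ t ≤ mixedPayoff G i σ

/-- Quasi-strictness: for every player `i`, every pure best response to `σ⁻ⁱ`
belongs to the support of `σ i`. -/
def IsQuasiStrict {n : ℕ} {m : Fin n → ℕ} (G : Game m) (σ : ∀ i, Fin (m i) → ℝ) : Prop :=
  ∀ (i : Fin n) (t : Fin (m i)),
    (∀ t' : Fin (m i), devPayoff G i σ t' ≤ devPayoff G i σ t) → 0 < σ i t

/-- A strict equilibrium: a pure profile `s` such that, for each player `i`, the strategy
`s i` is the *unique* best response to `s⁻ⁱ`. -/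
def IsStrictEq {n : ℕ} {m : Fin n → ℕ} (G : Game m) (σ : ∀ i, Fin (m i) → ℝ) : Prop :=
  ∃ s : Strat m, (σ = fun j => pureStrat (s j)) ∧
    ∀ (i : Fin n) (t : Fin (m i)), t ≠ s i → G i (Function.update s i t) < G i s

section Lemmas
variable {n : ℕ} {m : Fin n → ℕ}

lemma prod_pure (s t : Strat m) :
    (∏ j, pureStrat (s j) (t j)) = if t = s then (1:ℝ) else 0 := by
  simp only [pureStrat]
  rw [Finset.prod_boole]
  congr 1
  simp [funext_iff]

lemma mixedPayoff_pure (G : Game m) (i : Fin n) (s : Strat m) :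
    mixedPayoff G i (fun j => pureStrat (s j)) = G i s := by
  simp [mixedPayoff, prod_pure, ite_mul]

lemma update_pure (s : Strat m) (i : Fin n) (t : Fin (m i)) :
    Function.update (fun j => pureStrat (s j)) i (pureStrat t)
      = fun j => pureStrat (Function.update s i t j) := by
  funext j
  by_cases h : j = i
  · subst h; simp
  · simp [Function.update, h]

lemma devPayoff_pure (G : Game m) (i : Fin n) (s : Strat m) (t : Fin (m i)) :
    devPayoff G i (fun j => pureStrat (s j)) t = G i (Function.update s i t) := by
  rw [devPayoff, update_pure, mixedPayoff_pure]

lemma isMixedProfile_pure (s : Strat m) :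
    IsMixedProfile (fun j => pureStrat (s j)) := by
  intro i
  constructor
  · intro a; unfold pureStrat; positivity
  · simp [pureStrat]

lemma strictEq_nash {G : Game m} {σ : ∀ i, Fin (m i) → ℝ} (h : IsStrictEq G σ) :
    IsNash G σ := by
  obtain ⟨s, rfl, hs⟩ := h
  refine ⟨isMixedProfile_pure s, fun i t => ?_⟩
  rw [devPayoff_pure, mixedPayoff_pure]
  by_cases h : t = s i
  · subst h; simp
  · exact (hs i t h).le

end Lemmas
section Lemmas2
variable {n : ℕ} {m : Fin n → ℕ}

lemma mixedPayoff_decomp (G : Game m) (i : Fin n) (σ : ∀ j, Fin (m j) → ℝ) :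
    mixedPayoff G i σ = ∑ t, σ i t * devPayoff G i σ t := by
  have key : ∀ (t : Fin (m i)) (u : Strat m),
      (∏ j, Function.update σ i (pureStrat t) j (u j))
        = (if u i = t then (1:ℝ) else 0) * ∏ j ∈ Finset.univ.erase i, σ j (u j) := by
    intro t u
    rw [← Finset.mul_prod_erase Finset.univ _ (Finset.mem_univ i)]
    congr 1
    · simp [pureStrat]
    · refine Finset.prod_congr rfl fun j hj => ?_
      rw [Function.update_of_ne (Finset.ne_of_mem_erase hj)]
  unfold devPayoff mixedPayoff
  simp_rw [Finset.mul_sum]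
  rw [Finset.sum_comm]
  refine Finset.sum_congr rfl fun u _ => ?_
  rw [← Finset.mul_prod_erase Finset.univ (fun j => σ j (u j)) (Finset.mem_univ i)]
  simp only [key, ite_mul, one_mul, zero_mul, mul_ite, mul_zero, Finset.sum_ite_eq]
  simp [mul_assoc]

lemma continuous_mixedPayoff (i : Fin n) :
    Continuous fun p : Game m × (∀ j, Fin (m j) → ℝ) => mixedPayoff p.1 i p.2 := by
  unfold mixedPayoff
  refine continuous_finset_sum _ fun s _ => Continuous.mul ?_ ?_
  · exact continuous_finset_prod _ fun j _ =>
      (continuous_apply (s j)).comp ((continuous_apply j).comp continuous_snd)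
  · exact (continuous_apply s).comp ((continuous_apply i).comp continuous_fst)

lemma continuous_devPayoff (i : Fin n) (t : Fin (m i)) :
    Continuous fun p : Game m × (∀ j, Fin (m j) → ℝ) => devPayoff p.1 i p.2 t := by
  unfold devPayoff
  exact (continuous_mixedPayoff i).comp
    (continuous_fst.prodMk (continuous_snd.update i continuous_const))

end Lemmas2
section Lemmas3
variable {n : ℕ} {m : Fin n → ℕ}

lemma nash_pure_of_dom {G : Game m} {σ : ∀ j, Fin (m j) → ℝ} (hσ : IsNash G σ)
    (s : Strat m)
    (h : ∀ i t, t ≠ s i → devPayoff G i σ t < devPayoff G i σ (s i)) :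
    σ = fun j => pureStrat (s j) := by
  funext i
  have hsum := (hσ.1 i).2
  have hnn := (hσ.1 i).1
  set D := devPayoff G i σ (s i) with hD
  have h1 : ∑ t, σ i t * (D - devPayoff G i σ t) = D - mixedPayoff G i σ := by
    simp_rw [mul_sub]
    rw [Finset.sum_sub_distrib, ← Finset.sum_mul, hsum, one_mul,
      ← mixedPayoff_decomp]
  have hnonneg : ∀ t ∈ Finset.univ, 0 ≤ σ i t * (D - devPayoff G i σ t) := by
    intro t _
    rcases eq_or_ne t (s i) with rfl | ht
    · simp [hD]
    · exact mul_nonneg (hnn t) (by linarith [h i t ht])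
  have hzero : ∀ t, σ i t * (D - devPayoff G i σ t) = 0 := by
    have hsz : ∑ t, σ i t * (D - devPayoff G i σ t) = 0 :=
      le_antisymm (by rw [h1]; linarith [hσ.2 i (s i)]) (Finset.sum_nonneg hnonneg)
    intro t
    exact (Finset.sum_eq_zero_iff_of_nonneg hnonneg).mp hsz t (Finset.mem_univ t)
  have hz : ∀ t, t ≠ s i → σ i t = 0 := by
    intro t ht
    have := hzero t
    rcases mul_eq_zero.mp this with h' | h'
    · exact h'
    · exact absurd h' (by have := h i t ht; intro hc; linarith)
  have hone : σ i (s i) = 1 := by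
    have := Finset.sum_eq_single (s i) (fun b _ hb => hz b hb) (fun hc => absurd (Finset.mem_univ _) hc)
    rw [this] at hsum; exact hsum
  funext a
  rcases eq_or_ne a (s i) with rfl | ha
  · simp [pureStrat, hone]
  · simp [pureStrat, ha, hz a ha]

lemma isClosed_mixed : IsClosed {σ : ∀ i, Fin (m i) → ℝ | IsMixedProfile σ} := by
  have : {σ : ∀ i, Fin (m i) → ℝ | IsMixedProfile σ}
      = ⋂ i, ((⋂ a, {σ : ∀ i, Fin (m i) → ℝ | 0 ≤ σ i a})
        ∩ {σ : ∀ i, Fin (m i) → ℝ | ∑ a, σ i a = 1}) := by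
    ext σ
    simp only [Set.mem_iInter, Set.mem_inter_iff, Set.mem_setOf_eq]
    rfl
  rw [this]
  refine isClosed_iInter fun i => IsClosed.inter ?_ ?_
  · exact isClosed_iInter fun a =>
      isClosed_le continuous_const ((continuous_apply a).comp (continuous_apply i))
  · exact isClosed_eq
      (continuous_finset_sum _ fun a _ => (continuous_apply a).comp (continuous_apply i))
      continuous_const

lemma isCompact_mixed : IsCompact {σ : ∀ i, Fin (m i) → ℝ | IsMixedProfile σ} := by
  refine IsCompact.of_isClosed_subset
    (isCompact_univ_pi fun i => isCompact_univ_pi fun _ => isCompact_Icc (a := (0:ℝ)) (b := 1))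
    isClosed_mixed ?_
  intro σ hσ
  simp only [Set.mem_pi, Set.mem_univ, forall_true_left, Set.mem_Icc]
  intro i a
  refine ⟨(hσ i).1 a, ?_⟩
  calc σ i a ≤ ∑ b, σ i b :=
        Finset.single_le_sum (fun b _ => (hσ i).1 b) (Finset.mem_univ a)
    _ = 1 := (hσ i).2

end Lemmas3

/-- for every `k ≥ 1`, the set of `n`-player games of size
`m 0 × ⋯ × m (n-1)` having exactly `k` Nash equilibria, all of them strict, is open. -/
theorem statement17 (k : ℕ) (hk : 1 ≤ k) (n : ℕ) (m : Fin n → ℕ) (hm : ∀ i, 0 < m i) :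
    IsOpen {G : Game m | ∃ E : Finset (∀ i, Fin (m i) → ℝ),
      E.card = k ∧ (∀ σ, σ ∈ E ↔ IsNash G σ) ∧ ∀ σ ∈ E, IsStrictEq G σ} := by
  rw [isOpen_iff_forall_mem_open]
  rintro G₀ ⟨E, hcard, hNash, hstrict⟩
  have hEne : E.Nonempty := Finset.card_pos.mp (by rw [hcard]; exact hk)
  -- choose the pure profile underlying each strict equilibrium
  choose sfun hs_eq hs_lt using fun σ (h : σ ∈ E) => hstrict σ h
  -- STEP A : local rigidity around each strict equilibrium
  have hA : ∀ σ (hσE : σ ∈ E), ∃ (U : Set (Game m)) (ε : ℝ),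
      IsOpen U ∧ G₀ ∈ U ∧ 0 < ε ∧
      ∀ G ∈ U, ∀ σ', IsNash G σ' → dist σ' σ < ε → σ' = σ := by
    intro σ hσE
    set s := sfun σ hσE with hs
    set W : Set (Game m × (∀ i, Fin (m i) → ℝ)) :=
      {p | ∀ i t, t ≠ s i → devPayoff p.1 i p.2 t < devPayoff p.1 i p.2 (s i)} with hW
    have hWopen : IsOpen W := by
      have hWeq : W = ⋂ i, ⋂ t, {p : Game m × (∀ i, Fin (m i) → ℝ) |
          t ≠ s i → devPayoff p.1 i p.2 t < devPayoff p.1 i p.2 (s i)} := by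
        ext p; simp only [hW, Set.mem_setOf_eq, Set.mem_iInter]
      rw [hWeq]
      refine isOpen_iInter_of_finite fun i => isOpen_iInter_of_finite fun t => ?_
      by_cases h : t = s i
      · have : {p : Game m × (∀ i, Fin (m i) → ℝ) |
            t ≠ s i → devPayoff p.1 i p.2 t < devPayoff p.1 i p.2 (s i)} = Set.univ := by
          ext p; simp [h]
        rw [this]; exact isOpen_univ
      · have : {p : Game m × (∀ i, Fin (m i) → ℝ) |
            t ≠ s i → devPayoff p.1 i p.2 t < devPayoff p.1 i p.2 (s i)}
            = {p | devPayoff p.1 i p.2 t < devPayoff p.1 i p.2 (s i)} := by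
          ext p; simp [h]
        rw [this]
        exact isOpen_lt (continuous_devPayoff i t) (continuous_devPayoff i (s i))
    have hmemW : (G₀, σ) ∈ W := by
      intro i t ht
      show devPayoff G₀ i σ t < devPayoff G₀ i σ (s i)
      rw [hs_eq σ hσE, devPayoff_pure, devPayoff_pure, Function.update_eq_self]
      exact hs_lt σ hσE i t ht
    obtain ⟨u, v, hu, hv, hG₀u, hσv, huv⟩ := isOpen_prod_iff.mp hWopen G₀ σ hmemW
    obtain ⟨ε, hε, hball⟩ := Metric.isOpen_iff.mp hv σ hσv
    refine ⟨u, ε, hu, hG₀u, hε, ?_⟩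
    intro G hG σ' hσ' hdist
    have hpW : (G, σ') ∈ W := huv ⟨hG, hball (Metric.mem_ball.mpr hdist)⟩
    have hps := nash_pure_of_dom hσ' s (fun i t ht => hpW i t ht)
    rw [hps, hs_eq σ hσE]
  choose Ufun εfun hUopen hUmem hεpos hUkey using hA
  -- the uniform radius
  set ε₀ : ℝ := E.attach.inf' (Finset.attach_nonempty_iff.mpr hEne)
    (fun x => εfun x.1 x.2) with hε₀
  have hε₀pos : 0 < ε₀ :=
    (Finset.lt_inf'_iff _).mpr fun x _ => hεpos x.1 x.2
  have hε₀le : ∀ σ (h : σ ∈ E), ε₀ ≤ εfun σ h :=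
    fun σ h => Finset.inf'_le _ (Finset.mem_attach E ⟨σ, h⟩)
  -- STEP B : no equilibria far from E, for games near G₀
  set K : Set (∀ i, Fin (m i) → ℝ) :=
    {σ | IsMixedProfile σ ∧ ∀ τ ∈ E, ε₀ ≤ dist σ τ} with hK
  have hKclosed : IsClosed K := by
    have : K = {σ : ∀ i, Fin (m i) → ℝ | IsMixedProfile σ}
        ∩ ⋂ τ ∈ E, {σ : ∀ i, Fin (m i) → ℝ | ε₀ ≤ dist σ τ} := by
      ext σ; simp only [hK, Set.mem_setOf_eq, Set.mem_inter_iff, Set.mem_iInter]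
    rw [this]
    exact isClosed_mixed.inter (isClosed_biInter fun τ _ =>
      isClosed_le continuous_const (continuous_id.dist continuous_const))
  have hKcomp : IsCompact K :=
    IsCompact.of_isClosed_subset isCompact_mixed hKclosed (fun σ h => h.1)
  set O : Set (Game m × (∀ i, Fin (m i) → ℝ)) :=
    {p | ∃ i t, mixedPayoff p.1 i p.2 < devPayoff p.1 i p.2 t} with hO
  have hOopen : IsOpen O := by
    have : O = ⋃ i, ⋃ t, {p : Game m × (∀ i, Fin (m i) → ℝ) |
        mixedPayoff p.1 i p.2 < devPayoff p.1 i p.2 t} := by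
      ext p; simp only [hO, Set.mem_setOf_eq, Set.mem_iUnion]
    rw [this]
    exact isOpen_iUnion fun i => isOpen_iUnion fun t =>
      isOpen_lt (continuous_mixedPayoff i) (continuous_devPayoff i t)
  have hKO : ∀ σ ∈ K, (G₀, σ) ∈ O := by
    intro σ hσK
    by_contra hc
    simp only [hO, Set.mem_setOf_eq, not_exists, not_lt] at hc
    have hmem := (hNash σ).mpr ⟨hσK.1, hc⟩
    have := hσK.2 σ hmem
    rw [dist_self] at this
    linarith
  have htube : ∀ σ (h : σ ∈ K), ∃ u v, IsOpen u ∧ IsOpen v ∧ G₀ ∈ u ∧ σ ∈ v ∧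
      u ×ˢ v ⊆ O := fun σ h => isOpen_prod_iff.mp hOopen G₀ σ (hKO σ h)
  choose ufun vfun hu hv hG₀u hσv huv using htube
  obtain ⟨T, hT⟩ := hKcomp.elim_finite_subcover (fun x : K => vfun x.1 x.2)
    (fun x => hv x.1 x.2) (fun σ hσ => Set.mem_iUnion.mpr ⟨⟨σ, hσ⟩, hσv σ hσ⟩)
  set UB : Set (Game m) := ⋂ x ∈ T, ufun x.1 x.2 with hUB
  have hUBopen : IsOpen UB := isOpen_biInter_finset fun x _ => hu x.1 x.2
  have hG₀UB : G₀ ∈ UB := Set.mem_iInter₂.mpr fun x _ => hG₀u x.1 x.2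
  have hB : ∀ G ∈ UB, ∀ σ ∈ K, ¬ IsNash G σ := by
    intro G hGB σ hσK hNG
    obtain ⟨x, hxT, hσvx⟩ := Set.mem_iUnion₂.mp (hT hσK)
    have hGO : (G, σ) ∈ O := huv x.1 x.2 ⟨Set.mem_iInter₂.mp hGB x hxT, hσvx⟩
    obtain ⟨i, t, hlt⟩ := hGO
    exact absurd (hNG.2 i t) (not_le.mpr hlt)
  -- STEP C : persistence of strictness
  set UC : Set (Game m) := ⋂ x : {σ // σ ∈ E}, ⋂ i, ⋂ t,
    {G : Game m | t ≠ sfun x.1 x.2 i →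
      G i (Function.update (sfun x.1 x.2) i t) < G i (sfun x.1 x.2)} with hUC
  have hUCopen : IsOpen UC := by
    refine isOpen_iInter_of_finite fun x => isOpen_iInter_of_finite fun i =>
      isOpen_iInter_of_finite fun t => ?_
    by_cases h : t = sfun x.1 x.2 i
    · have : {G : Game m | t ≠ sfun x.1 x.2 i →
          G i (Function.update (sfun x.1 x.2) i t) < G i (sfun x.1 x.2)} = Set.univ := by
        ext G; simp [h]
      rw [this]; exact isOpen_univ
    · have heq : {G : Game m | t ≠ sfun x.1 x.2 i →
          G i (Function.update (sfun x.1 x.2) i t) < G i (sfun x.1 x.2)}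
          = {G : Game m | G i (Function.update (sfun x.1 x.2) i t) < G i (sfun x.1 x.2)} := by
        ext G; simp [h]
      rw [heq]
      exact isOpen_lt
        ((continuous_apply (Function.update (sfun x.1 x.2) i t)).comp (continuous_apply i))
        ((continuous_apply (sfun x.1 x.2)).comp (continuous_apply i))
  have hG₀UC : G₀ ∈ UC :=
    Set.mem_iInter.mpr fun x => Set.mem_iInter.mpr fun i => Set.mem_iInter.mpr fun t =>
      fun ht => hs_lt x.1 x.2 i t ht
  have hC : ∀ G ∈ UC, ∀ σ (h : σ ∈ E), IsStrictEq G σ := by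
    intro G hG σ h
    refine ⟨sfun σ h, hs_eq σ h, fun i t ht => ?_⟩
    have := Set.mem_iInter.mp (Set.mem_iInter.mp
      (Set.mem_iInter.mp hG ⟨σ, h⟩) i) t
    exact this ht
  -- STEP A neighborhoods, intersected
  set UA : Set (Game m) := ⋂ x : {σ // σ ∈ E}, Ufun x.1 x.2 with hUA
  have hUAopen : IsOpen UA := isOpen_iInter_of_finite fun x => hUopen x.1 x.2
  have hG₀UA : G₀ ∈ UA := Set.mem_iInter.mpr fun x => hUmem x.1 x.2
  -- Assemble
  refine ⟨UA ∩ UB ∩ UC, ?_, (hUAopen.inter hUBopen).inter hUCopen,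
    ⟨⟨hG₀UA, hG₀UB⟩, hG₀UC⟩⟩
  rintro G ⟨⟨hGA, hGB⟩, hGC⟩
  refine ⟨E, hcard, fun σ => ⟨fun hσ => ?_, fun hσ => ?_⟩, fun σ hσ => hC G hGC σ hσ⟩
  · exact strictEq_nash (hC G hGC σ hσ)
  · -- a Nash equilibrium of G must lie in E
    have hnear : ∃ τ, ∃ h : τ ∈ E, dist σ τ < ε₀ := by
      by_contra hc
      push_neg at hc
      exact hB G hGB σ ⟨hσ.1, fun τ hτ => hc τ hτ⟩ hσ
    obtain ⟨τ, hτ, hd⟩ := hnear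
    have := hUkey τ hτ G (Set.mem_iInter.mp hGA ⟨τ, hτ⟩) σ hσ
      (lt_of_lt_of_le hd (hε₀le τ hτ))
    rw [this]; exact hτ
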